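/- arXiv:1209.2875 — 7 statements merged into one kernel-verified Lean document; each statement's English description precedes it below -/
import Mathlib

section
/- There exists a universal machine: a partial computable function U : B → B such that for every partial computable function L : B → B there is a constant k with C_U(b) ≤ C_L(b) + k for all binary strings b (where C_M(b) is the least length of an input mapped by M to b, and the inequality is interpreted as: whenever C_L(b) is finite, C_U(b) is finite and bounded by C_L(b) + k). -/
open MeasureTheory
open scoped ENNReal

/-- The length-`n` initial segment of an infinite binary sequence. -/
def pref (x : ℕ → Bool) (n : ℕ) : List Bool := List.ofFn (fun i : Fin n => x i)

/-- A set of binary strings is prefix-free if no member is a proper prefix of another. -/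
def PFree (S : Set (List Bool)) : Prop := ∀ a ∈ S, ∀ b ∈ S, a <+: b → a = b

/-- Kolmogorov complexity of `b` relative to machine `M`: the least length of an
input mapped by `M` to `b`, `∞` if there is none. -/
noncomputable def Cpx (M : List Bool →. List Bool) (b : List Bool) : ℕ∞ :=
  sInf {n : ℕ∞ | ∃ p : List Bool, b ∈ M p ∧ (p.length : ℕ∞) = n}

/-- A universal machine for plain complexity. -/
def Universal (U : List Bool →. List Bool) : Prop :=
  Partrec U ∧ ∀ L : List Bool →. List Bool, Partrec L →
    ∃ k : ℕ, ∀ b : List Bool, Cpx U b ≤ Cpx L b + (k : ℕ∞)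

/-- A prefix-free universal machine: prefix-free domain, universal among machines
with prefix-free domain. -/
def PFUniversal (V : List Bool →. List Bool) : Prop :=
  Partrec V ∧ PFree {p | (V p).Dom} ∧
    ∀ L : List Bool →. List Bool, Partrec L → PFree {p | (L p).Dom} →
      ∃ k : ℕ, ∀ b : List Bool, Cpx V b ≤ Cpx L b + (k : ℕ∞)

/-- `cyl S` is the set of infinite binary sequences extending some member of `S`. -/
def cyl (S : Set (List Bool)) : Set (ℕ → Bool) := {x | ∃ b ∈ S, pref x b.length = b}

/-- The `e`-th computably enumerable set of binary strings. -/
def W (e : ℕ) : Set (List Bool) :=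
  {b | ((Denumerable.ofNat Nat.Partrec.Code e).eval (Encodable.encode b)).Dom}

/-- The binary-digit expansion of a real number. -/
noncomputable def binSeq (r : ℝ) : ℕ → Bool := fun n => decide (⌊r * 2 ^ (n + 1)⌋ % 2 = 1)

/-- The fair-coin (uniform product) measure on Cantor space, as the pushforward of
Lebesgue measure on `(0,1]` under binary expansion. -/
noncomputable def coin : Measure (ℕ → Bool) :=
  Measure.map binSeq (volume.restrict (Set.Ioc (0 : ℝ) 1))

/-- Martin-Löf test in sense 2. -/
def MLTest (f : ℕ → ℕ) : Prop :=
  Computable f ∧ ∀ n : ℕ, coin (cyl (W (f n))) ≤ (2 : ℝ≥0∞)⁻¹ ^ n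

/-- `x` fails the sense-2 test `f`. -/
def Fails (x : ℕ → Bool) (f : ℕ → ℕ) : Prop := ∀ n : ℕ, x ∈ cyl (W (f n))

/-- Martin-Löf randomness (sense 2). -/
def MLRandom (x : ℕ → Bool) : Prop := ∀ f : ℕ → ℕ, MLTest f → ¬ Fails x f

/-- The dyadic rational value of a finite binary string. -/
noncomputable def sval (b : List Bool) : ℝ :=
  ∑ i : Fin b.length, if b.get i then ((2 : ℝ))⁻¹ ^ (i.val + 1) else 0

/-- Chaitin's halting probability of machine `V`. -/
noncomputable def Omega (V : List Bool →. List Bool) : ℝ :=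
  ∑' p : {p : List Bool // (V p).Dom}, ((2 : ℝ))⁻¹ ^ (p.val.length)

/-- Martin-Löf test in sense 1. -/
def MLTest1 (t : List Bool →. ℕ) : Prop :=
  Partrec t ∧ ∀ m : ℕ, coin (cyl {b | ∃ v ∈ t b, m ≤ v}) ≤ (2 : ℝ≥0∞)⁻¹ ^ m

/-- `x` passes the sense-1 test `t`: the values of `t` on `x`'s prefixes are bounded. -/
def Passes1 (x : ℕ → Bool) (t : List Bool →. ℕ) : Prop :=
  ∃ B : ℕ, ∀ (n : ℕ) (v : ℕ), v ∈ t (pref x n) → v ≤ B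

/-- A set of binary strings is computably enumerable. -/
def CE (S : Set (List Bool)) : Prop :=
  ∃ f : List Bool →. ℕ, Partrec f ∧ S = {b | (f b).Dom}


open Nat.Partrec (Code)

def decodeInput : List Bool → Option (ℕ × List Bool)
  | [] => none
  | b :: t => if b then (decodeInput t).map (fun ed => (ed.1 + 1, ed.2)) else some (0, t)

lemma decodeInput_spec (e : ℕ) (p : List Bool) :
    decodeInput (List.replicate e true ++ false :: p) = some (e, p) := by
  induction e with
  | zero => simp [decodeInput]
  | succ n ih => simp [List.replicate_succ, decodeInput, ih]

lemma decodeInput_primrec : Primrec decodeInput := by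
  have : Primrec fun l : List Bool =>
      List.rec (motive := fun _ => Option (ℕ × List Bool)) none
        (fun b t r => if b then r.map (fun ed => (ed.1 + 1, ed.2)) else some (0, t)) l := by
    have h : Primrec fun (x : List Bool × Bool × List Bool × Option (ℕ × List Bool)) =>
        cond x.2.1 (x.2.2.2.map (fun ed => (ed.1 + 1, ed.2))) (some (0, x.2.2.1)) := by
      apply Primrec.cond (Primrec.fst.comp Primrec.snd)
      · exact Primrec.option_map (Primrec.snd.comp (Primrec.snd.comp Primrec.snd))
          ((Primrec.pair (Primrec.succ.comp Primrec.fst) Primrec.snd).comp Primrec.snd).to₂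
      · exact Primrec.option_some.comp
          (Primrec.pair (Primrec.const 0) (Primrec.fst.comp (Primrec.snd.comp Primrec.snd)))
    have h2 : Primrec fun (x : List Bool × Bool × List Bool × Option (ℕ × List Bool)) =>
        if x.2.1 then x.2.2.2.map (fun ed => (ed.1 + 1, ed.2)) else some (0, x.2.2.1) :=
      h.of_eq fun x => by cases hx : x.2.1 <;> simp [hx]
    exact Primrec.list_rec Primrec.id (Primrec.const none) h2.to₂
  refine this.of_eq fun l => ?_
  induction l with
  | nil => rfl
  | cons b t ih => simp [decodeInput, ← ih]

noncomputable def Umach : List Bool →. List Bool := fun p =>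
  (Part.ofOption (decodeInput p)).bind fun ed =>
    ((Denumerable.ofNat Code ed.1).eval (Encodable.encode ed.2)).bind fun m =>
      Part.ofOption (Encodable.decode (α := List Bool) m)

lemma Umach_partrec : Partrec Umach := by
  apply Partrec.bind (Computable.ofOption decodeInput_primrec.to_comp)
  apply Partrec.bind
  · exact (Nat.Partrec.Code.eval_part.comp
      ((Computable.ofNat Code).comp (Computable.fst.comp Computable.snd))
      (Computable.encode.comp (Computable.snd.comp Computable.snd)))
  · exact Computable.ofOption (Primrec.decode.to_comp.comp (Computable.snd))

lemma Umach_univ (L : List Bool →. List Bool) (hL : Partrec L) :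
    ∃ k : ℕ, ∀ b p : List Bool, b ∈ L p →
      ∃ q : List Bool, b ∈ Umach q ∧ q.length = p.length + k := by
  obtain ⟨c, hc⟩ := Nat.Partrec.Code.exists_code.1 hL
  refine ⟨Encodable.encode c + 1, fun b p hbp => ?_⟩
  refine ⟨List.replicate (Encodable.encode c) true ++ false :: p, ?_, by simp; omega⟩
  have hdec : decodeInput (List.replicate (Encodable.encode c) true ++ false :: p)
      = some (Encodable.encode c, p) := decodeInput_spec _ _
  simp only [Umach, hdec, Part.coe_some, Part.bind_eq_bind, Part.mem_bind_iff,
    Part.mem_some_iff]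
  refine ⟨(Encodable.encode c, p), rfl, ?_⟩
  refine ⟨Encodable.encode b, ?_, by simp⟩
  have h1 : (Denumerable.ofNat Nat.Partrec.Code (Encodable.encode c)) = c := by simp
  rw [h1, hc]
  simp only [Part.bind_eq_bind]
  simp only [Encodable.encodek, Part.coe_some, Part.bind_eq_bind, Part.bind_some]
  exact Part.mem_map Encodable.encode hbp


theorem Umach_cpx (L : List Bool →. List Bool) (hL : Partrec L) :
    ∃ k : ℕ, ∀ b : List Bool, Cpx Umach b ≤ Cpx L b + (k : ℕ∞) := by
  obtain ⟨k, hk⟩ := Umach_univ L hL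
  refine ⟨k, fun b => ?_⟩
  rcases Set.eq_empty_or_nonempty {n : ℕ∞ | ∃ p : List Bool, b ∈ L p ∧ (p.length : ℕ∞) = n}
    with hS | hS
  · simp [Cpx, hS]
  · obtain ⟨p, hbp, hps⟩ := csInf_mem hS
    obtain ⟨q, hq, hql⟩ := hk b p hbp
    calc Cpx Umach b ≤ (q.length : ℕ∞) := sInf_le ⟨q, hq, rfl⟩
      _ = (p.length : ℕ∞) + (k : ℕ∞) := by rw [hql]; push_cast; ring
      _ = Cpx L b + (k : ℕ∞) := by rw [Cpx, hps]

theorem stmt1' :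
    ∃ U : List Bool →. List Bool, Partrec U ∧
      ∀ L : List Bool →. List Bool, Partrec L →
        ∃ k : ℕ, ∀ b : List Bool, Cpx U b ≤ Cpx L b + (k : ℕ∞) :=
  ⟨Umach, Umach_partrec, Umach_cpx⟩

/-- Universal machines exist. -/
theorem stmt1 :
    ∃ U : List Bool →. List Bool, Partrec U ∧
      ∀ L : List Bool →. List Bool, Partrec L →
        ∃ k : ℕ, ∀ b : List Bool, Cpx U b ≤ Cpx L b + (k : ℕ∞) := stmt1'
end

section
/- There is no computable injective enumeration of infinitely many short programs, where p is short if U(p) is defined and |p| ≤ |q| for every q with U(q) = U(p); equivalently, no computable function enumerates an infinite set S of strings with C(U(p)) = |p| for all p ∈ S. -/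
open MeasureTheory
open scoped ENNReal

/-
Running `U` on the first enumerated program of length at least `n²` is a partial computable
function of `n`; it is total because an injective enumeration of binary strings contains
arbitrarily long ones, and since the program found is short, its output has complexity at
least `n²`. Feeding `n` to it through the length of an input, universality bounds that
complexity by `n + k`, which fails for `n = k + 2`.
-/

lemma Cpx_le_length_of_mem {M : List Bool →. List Bool} {b p : List Bool} (h : b ∈ M p) :
    Cpx M b ≤ p.length :=
  sInf_le ⟨p, h, rfl⟩

lemma le_Cpx_of_forall_le_length {M : List Bool →. List Bool} {b : List Bool} {m : ℕ}
    (h : ∀ q : List Bool, b ∈ M q → m ≤ q.length) : (m : ℕ∞) ≤ Cpx M b := by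
  refine le_sInf ?_
  rintro n ⟨p, hp, rfl⟩
  exact_mod_cast h p hp

lemma Universal.exists_Cpx_le_add {U : List Bool →. List Bool} (hU : Universal U)
    {f : ℕ →. List Bool} (hf : Partrec f) :
    ∃ k : ℕ, ∀ (n : ℕ) (b : List Bool), b ∈ f n → Cpx U b ≤ n + k := by
  obtain ⟨k, hk⟩ := hU.2 (fun p => f p.length) (hf.comp Computable.list_length)
  refine ⟨k, fun n b hb => (hk b).trans (add_le_add_left ?_ _)⟩
  simpa using Cpx_le_length_of_mem (M := fun p => f p.length) (p := List.replicate n false)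
    (by simpa using hb)

lemma exists_le_length_of_injective {α : Type*} [Finite α] {g : ℕ → List α}
    (hg : Function.Injective g) (m : ℕ) : ∃ i, m ≤ (g i).length := by
  by_contra! h
  exact Set.infinite_range_of_injective hg
    ((List.finite_length_lt α m).subset (Set.range_subset_iff.2 h))

def firstLengthAtLeast {α : Type*} (g : ℕ → List α) (m : ℕ) : Part ℕ :=
  Nat.rfind fun i => Part.some (decide (m ≤ (g i).length))

section firstLengthAtLeast

variable {α : Type*} {g : ℕ → List α} {m j : ℕ}

lemma le_length_of_mem_firstLengthAtLeast (h : j ∈ firstLengthAtLeast g m) :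
    m ≤ (g j).length := by
  simpa using Nat.rfind_spec h

lemma firstLengthAtLeast_dom (h : ∃ i, m ≤ (g i).length) : (firstLengthAtLeast g m).Dom := by
  obtain ⟨i, hi⟩ := h
  exact Nat.rfind_dom.2 ⟨i, by simpa using hi, fun _ => trivial⟩

lemma Computable.partrec_firstLengthAtLeast [Primcodable α] (hg : Computable g) :
    Partrec (firstLengthAtLeast g) := by
  have hle : Computable₂ fun (m i : ℕ) => decide (m ≤ (g i).length) :=
    Primrec.nat_le.decide.to_comp.comp Computable.fst
      (Computable.list_length.comp (hg.comp Computable.snd))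
  exact Partrec.rfind hle.partrec₂

end firstLengthAtLeast

/-- There is no computable injective enumeration of infinitely many short programs. -/
theorem stmt3 (U : List Bool →. List Bool) (hU : Universal U) :
    ¬ ∃ g : ℕ → List Bool, Computable g ∧ Function.Injective g ∧
        ∀ i : ℕ, ∃ b : List Bool, b ∈ U (g i) ∧
          ∀ q : List Bool, b ∈ U q → (g i).length ≤ q.length := by
  rintro ⟨g, hg, hinj, hshort⟩
  set f : ℕ →. List Bool := fun n => (firstLengthAtLeast g (n * n)).bind (U ∘ g)
  have hf : Partrec f :=
    (hg.partrec_firstLengthAtLeast.comp (Primrec.nat_mul.to_comp.comp .id .id)).bind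
      (hU.1.comp (hg.comp Computable.snd))
  obtain ⟨k, hk⟩ := hU.exists_Cpx_le_add hf
  have hsq_le : ∀ n : ℕ, n * n ≤ n + k := by
    intro n
    obtain ⟨j, hj⟩ := Part.dom_iff_mem.1
      (firstLengthAtLeast_dom (exists_le_length_of_injective hinj (n * n)))
    obtain ⟨b, hb, hbshort⟩ := hshort j
    have hlow : ((n * n : ℕ) : ℕ∞) ≤ Cpx U b :=
      le_Cpx_of_forall_le_length fun q hq =>
        (le_length_of_mem_firstLengthAtLeast hj).trans (hbshort q hq)
    exact_mod_cast hlow.trans (hk n b (Part.mem_bind_iff.2 ⟨j, hj, hb⟩))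
  nlinarith [hsq_le (k + 2)]
end

section
/- Plain Kolmogorov complexity is not subadditive: for every ℓ ∈ ℕ there exist binary strings a, b such that C(a ⋆ b) ≥ C(a) + C(b) + ℓ, where ⋆ denotes concatenation. -/
open MeasureTheory
open scoped ENNReal

/-!
Take an incompressible string `x` of length `N`, let `w` be its first `m` bits and let `s` be the
code number of `w`, with `N` so large that `m + s ≤ N` for every `w` of length `m`. Split
`x = a ++ b` with `|a| = m + s`. Since `a` begins with `w` and `s` is its length minus `m`, the
last `s` bits of `a` determine all of `a`, so `C(a) ≤ |a| - m + O(1)`; trivially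
`C(b) ≤ |b| + O(1)`. Hence `C(a) + C(b) ≤ N - m + O(1) ≤ C(a ++ b) - m + O(1)`, and `m` is
arbitrary.
-/

theorem exists_finset_length_lt_subset_card_lt_two_pow (N : ℕ) :
    ∃ T : Finset (List Bool), {p : List Bool | p.length < N} ⊆ ↑T ∧ T.card < 2 ^ N := by
  refine ⟨(Finset.range N).biUnion fun n =>
    (Finset.univ : Finset (List.Vector Bool n)).map
      ⟨List.Vector.toList, List.Vector.toList_injective⟩, ?_, ?_⟩
  · intro p hp
    simp only [Finset.mem_coe, Finset.mem_biUnion, Finset.mem_range, Finset.mem_map,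
      Finset.mem_univ, true_and]
    exact ⟨p.length, hp, ⟨p, rfl⟩, rfl⟩
  · calc _ ≤ ∑ n ∈ Finset.range N, 2 ^ n := by
          refine (Finset.card_biUnion_le).trans (Finset.sum_le_sum fun n _ => ?_)
          rw [Finset.card_map, Finset.card_univ, card_vector, Fintype.card_bool]
      _ < 2 ^ N := by
          rw [Nat.geomSum_eq le_rfl]
          have := Nat.one_le_two_pow (n := N)
          omega

namespace Cpx

theorem le_length {M : List Bool →. List Bool} {b p : List Bool} (h : b ∈ M p) :
    Cpx M b ≤ p.length :=
  sInf_le ⟨p, h, rfl⟩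

theorem le_of_forall_le_length {M : List Bool →. List Bool} {b : List Bool} {N : ℕ}
    (h : ∀ p, b ∈ M p → N ≤ p.length) :
    (N : ℕ∞) ≤ Cpx M b :=
  le_sInf fun _ ⟨p, hp, hn⟩ => hn ▸ by exact_mod_cast h p hp

theorem exists_length_eq_le (M : List Bool →. List Bool) (N : ℕ) :
    ∃ x : List Bool, x.length = N ∧ (N : ℕ∞) ≤ Cpx M x := by
  by_contra! hcompr
  have hshort : ∀ x : List.Vector Bool N, ∃ p : List Bool, x.val ∈ M p ∧ p.length < N := by
    intro x
    by_contra! hlong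
    exact (hcompr x.val x.2).not_ge (le_of_forall_le_length hlong)
  choose p hp hlen using hshort
  obtain ⟨T, hT, hcard⟩ := exists_finset_length_lt_subset_card_lt_two_pow N
  have hinj : Set.InjOn p ↑(Finset.univ : Finset (List.Vector Bool N)) := fun x _ y _ hxy =>
    Subtype.ext (Part.mem_unique (hp x) (hxy ▸ hp y))
  have := Finset.card_le_card_of_injOn p (fun x _ => hT (hlen x)) hinj
  simp only [Finset.card_univ, card_vector, Fintype.card_bool] at this
  omega

end Cpx

open Encodable

def prependDecode (q : List Bool) : List Bool :=
  (decode (α := List Bool) q.length).getD [] ++ q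

theorem prependDecode_of_length_eq_encode {w q : List Bool} (h : q.length = encode w) :
    prependDecode q = w ++ q := by
  rw [prependDecode, h, encodek, Option.getD_some]

theorem computable_prependDecode : Computable prependDecode :=
  Computable.list_append.comp
    (Computable.option_getD (Computable.decode.comp Computable.list_length)
      (Computable.const [])) Computable.id

namespace Universal

variable {U : List Bool →. List Bool}

theorem exists_cpx_le_length_add (hU : Universal U) :
    ∃ c : ℕ, ∀ b : List Bool, Cpx U b ≤ b.length + c := by
  obtain ⟨c, hc⟩ := hU.2 (fun p => Part.some p) Computable.id.partrec
  exact ⟨c, fun b => (hc b).trans (add_le_add_left (Cpx.le_length (Part.mem_some b)) _)⟩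

theorem exists_cpx_append_le (hU : Universal U) :
    ∃ k : ℕ, ∀ w q : List Bool, q.length = encode w → Cpx U (w ++ q) ≤ q.length + k := by
  obtain ⟨k, hk⟩ := hU.2 (fun p => Part.some (prependDecode p)) computable_prependDecode.partrec
  refine ⟨k, fun w q h => (hk _).trans (add_le_add_left (Cpx.le_length ?_) _)⟩
  rw [← prependDecode_of_length_eq_encode h]
  exact Part.mem_some _

end Universal

/-- Plain complexity is not subadditive: for every `ℓ` there are `a, b` with
`C(a ⋆ b) ≥ C(a) + C(b) + ℓ`. -/
theorem stmt7 (U : List Bool →. List Bool) (hU : Universal U) (ℓ : ℕ) :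
    ∃ a b : List Bool, Cpx U a + Cpx U b + (ℓ : ℕ∞) ≤ Cpx U (a ++ b) := by
  obtain ⟨c, hc⟩ := hU.exists_cpx_le_length_add
  obtain ⟨k, hk⟩ := hU.exists_cpx_append_le
  set m := ℓ + k + c
  obtain ⟨B, hB⟩ := ((List.finite_length_eq Bool m).image encode).bddAbove
  obtain ⟨x, hx, hxC⟩ := Cpx.exists_length_eq_le U (m + B)
  set s := encode (x.take m)
  have hs : s ≤ B := hB ⟨x.take m, by simp [hx], rfl⟩
  set q := (x.drop m).take s
  have hq : q.length = s := by simp [q, hx]; omega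
  set b := (x.drop m).drop s
  have hb : b.length = B - s := by simp [b, hx]; omega
  refine ⟨x.take m ++ q, b, ?_⟩
  rw [List.append_assoc, List.take_append_drop, List.take_append_drop]
  calc Cpx U (x.take m ++ q) + Cpx U b + ℓ
      ≤ (s + k : ℕ) + ((B - s : ℕ) + c) + ℓ := by
        gcongr
        · exact hq ▸ hk _ _ hq
        · exact hb ▸ hc b
    _ = ((s + k + (B - s + c) + ℓ : ℕ) : ℕ∞) := by norm_cast
    _ = (m + B : ℕ) := by congr 1; omega
    _ ≤ Cpx U x := hxC
end

section
/- Kraft's inequality: a sequence (ℓ_i) of natural numbers is the sequence of lengths of the members of some prefix-free set of binary strings if and only if Σ_i 2^{-ℓ_i} ≤ 1. -/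
/-! If no codeword is a prefix of another, the sets of length-`N` strings extending the
codewords are pairwise disjoint, so counting them gives `∑ 2 ^ (N - ℓ i) ≤ 2 ^ N` for every
finite subfamily with lengths at most `N`.

Conversely, if `∑ 2^{-ℓ i} ≤ 1` then only finitely many `i` have `ℓ i ≤ n`, so `ι` can be
ordered by length with every element having finitely many predecessors. Give `i` the first
`ℓ i` binary digits of `x_i = ∑_{j < i} 2^{-ℓ j}`: the dyadic intervals `[x_i, x_i + 2^{-ℓ i})`
lie in `[0, 1]` and are pairwise disjoint, which is exactly prefix-freeness of the digit
strings. -/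

open MeasureTheory
open scoped ENNReal

open Finset

def fixedBits : ℕ → ℕ → List Bool
  | 0, _ => []
  | n + 1, m => fixedBits n (m / 2) ++ [decide (m % 2 = 1)]

@[simp]
lemma length_fixedBits (n m : ℕ) : (fixedBits n m).length = n := by
  induction n generalizing m <;> simp [fixedBits, *]

lemma fixedBits_add (j d m : ℕ) :
    fixedBits (j + d) m = fixedBits j (m / 2 ^ d) ++ fixedBits d m := by
  induction d generalizing m with
  | zero => simp [fixedBits]
  | succ d ih =>
    rw [← add_assoc, fixedBits, ih, fixedBits, Nat.div_div_eq_div_mul, pow_succ',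
      List.append_assoc]

lemma fixedBits_injOn (n : ℕ) : Set.InjOn (fixedBits n) (Set.Iio (2 ^ n)) := by
  induction n with
  | zero => intro m hm m' hm' _; simp_all
  | succ n ih =>
    intro m hm m' hm' h
    simp only [Set.mem_Iio, pow_succ] at hm hm'
    obtain ⟨hhigh, hlow⟩ := List.append_inj h (by simp)
    have : m / 2 = m' / 2 := ih (Set.mem_Iio.2 (by omega)) (Set.mem_Iio.2 (by omega)) hhigh
    simp only [List.cons.injEq, decide_eq_decide, and_true] at hlow
    omega

lemma fixedBits_prefix_fixedBits_iff {a b m m' : ℕ} (hab : a ≤ b) (hm : m < 2 ^ a)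
    (hm' : m' < 2 ^ b) : fixedBits a m <+: fixedBits b m' ↔ m = m' / 2 ^ (b - a) := by
  obtain ⟨d, rfl⟩ := Nat.exists_eq_add_of_le hab
  rw [fixedBits_add, Nat.add_sub_cancel_left]
  refine ⟨fun h => fixedBits_injOn a hm ?_ ?_, fun h => h ▸ List.prefix_append _ _⟩
  · rw [Set.mem_Iio, Nat.div_lt_iff_lt_mul (by positivity), ← pow_add]
    exact hm'
  · exact (List.prefix_of_prefix_length_le h (List.prefix_append _ _) (by simp)).eq_of_length
      (by simp)

lemma sum_inv_two_pow_le_one_iff {ι : Type*} {s : Finset ι} {ℓ : ι → ℕ} {n : ℕ}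
    (h : ∀ j ∈ s, ℓ j ≤ n) :
    ∑ j ∈ s, (2 : ℝ≥0∞)⁻¹ ^ ℓ j ≤ 1 ↔ ∑ j ∈ s, 2 ^ (n - ℓ j) ≤ 2 ^ n := by
  have hterm : ∀ j ∈ s, (2 : ℝ≥0∞)⁻¹ ^ ℓ j = 2 ^ (n - ℓ j) * 2⁻¹ ^ n := by
    intro j hj
    obtain ⟨k, hk⟩ := Nat.exists_eq_add_of_le (h j hj)
    rw [hk, Nat.add_sub_cancel_left, pow_add, mul_left_comm, ← mul_pow,
      ENNReal.mul_inv_cancel two_ne_zero ENNReal.ofNat_ne_top, one_pow, mul_one]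
  rw [sum_congr rfl hterm, ← sum_mul, ← ENNReal.inv_pow,
    ENNReal.mul_inv_le_iff (pow_ne_zero _ two_ne_zero) (ENNReal.pow_ne_top ENNReal.ofNat_ne_top),
    one_mul]
  exact_mod_cast Iff.rfl

def extensions (b : List Bool) (k : ℕ) : Finset (List Bool) :=
  univ.image fun t : Fin k → Bool => b ++ List.ofFn t

lemma card_extensions (b : List Bool) (k : ℕ) : #(extensions b k) = 2 ^ k := by
  rw [extensions, card_image_of_injective _ fun t t' h =>
    List.ofFn_injective (List.append_cancel_left h)]
  simp

lemma mem_extensions {b w : List Bool} {k : ℕ} :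
    w ∈ extensions b k ↔ b <+: w ∧ w.length = b.length + k := by
  constructor
  · simp only [extensions, mem_image, mem_univ, true_and]
    rintro ⟨t, rfl⟩
    simp
  · rintro ⟨⟨t, rfl⟩, hlen⟩
    obtain rfl : t.length = k := by simpa using hlen
    exact mem_image.2 ⟨t.get, mem_univ _, by rw [List.ofFn_get]⟩

lemma PFree.sum_two_pow_sub_length_le {S : Set (List Bool)} (hS : PFree S)
    {s : Finset (List Bool)} (hs : ↑s ⊆ S) {N : ℕ} (hN : ∀ w ∈ s, w.length ≤ N) :
    ∑ w ∈ s, 2 ^ (N - w.length) ≤ 2 ^ N := by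
  have hdisj : (s : Set (List Bool)).PairwiseDisjoint fun w => extensions w (N - w.length) := by
    intro u hu v hv huv
    refine Finset.disjoint_left.2 fun x hxu hxv => huv ?_
    rcases List.prefix_or_prefix_of_prefix (mem_extensions.1 hxu).1 (mem_extensions.1 hxv).1
      with h | h
    · exact hS u (hs hu) v (hs hv) h
    · exact (hS v (hs hv) u (hs hu) h).symm
  calc ∑ w ∈ s, 2 ^ (N - w.length) = #(s.biUnion fun w => extensions w (N - w.length)) := by
        simp only [card_biUnion hdisj, card_extensions]
    _ ≤ #(extensions [] N) := card_le_card fun x hx => ?_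
    _ = 2 ^ N := card_extensions [] N
  obtain ⟨w, hw, hx⟩ := mem_biUnion.1 hx
  have := hN w hw
  exact mem_extensions.2 ⟨List.nil_prefix, by
    simp only [(mem_extensions.1 hx).2, List.length_nil, zero_add]; omega⟩

lemma PFree.tsum_inv_two_pow_length_le_one {S : Set (List Bool)} (hS : PFree S) :
    ∑' w : S, (2 : ℝ≥0∞)⁻¹ ^ (w : List Bool).length ≤ 1 := by
  rw [ENNReal.tsum_eq_iSup_sum]
  refine iSup_le fun t => ?_
  set s := t.map (Function.Embedding.subtype _)
  have hN : ∀ w ∈ s, w.length ≤ s.sup List.length := fun w hw => le_sup hw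
  calc ∑ w ∈ t, (2 : ℝ≥0∞)⁻¹ ^ (w : List Bool).length = ∑ w ∈ s, (2 : ℝ≥0∞)⁻¹ ^ w.length :=
        (sum_map t (Function.Embedding.subtype _) fun w => (2 : ℝ≥0∞)⁻¹ ^ w.length).symm
    _ ≤ 1 := (sum_inv_two_pow_le_one_iff hN).2 (hS.sum_two_pow_sub_length_le (by simp [s]) hN)

section KraftCode

variable {ι : Type*} [LinearOrder ι] [LocallyFiniteOrderBot ι]

/-- For monotone `ℓ`, `kraftOffset ℓ i / 2 ^ ℓ i = ∑_{j < i} 2^{-ℓ j}` is the left endpoint of the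
dyadic interval assigned to `i`. -/
def kraftOffset (ℓ : ι → ℕ) (i : ι) : ℕ := ∑ j ∈ Iio i, 2 ^ (ℓ i - ℓ j)

def kraftCode (ℓ : ι → ℕ) (i : ι) : List Bool := fixedBits (ℓ i) (kraftOffset ℓ i)

variable {ℓ : ι → ℕ}

lemma kraftOffset_add_one (i : ι) :
    kraftOffset ℓ i + 1 = ∑ j ∈ Iic i, 2 ^ (ℓ i - ℓ j) := by
  rw [← Iio_insert, sum_insert (by simp), Nat.sub_self, pow_zero, add_comm, kraftOffset]

lemma kraftOffset_lt (hℓ : Monotone ℓ) {i : ι} (h : ∑ j ∈ Iic i, (2 : ℝ≥0∞)⁻¹ ^ ℓ j ≤ 1) :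
    kraftOffset ℓ i < 2 ^ ℓ i := by
  rw [Nat.lt_iff_add_one_le, kraftOffset_add_one]
  exact (sum_inv_two_pow_le_one_iff fun j hj => hℓ (mem_Iic.1 hj)).1 h

lemma kraftOffset_lt_div (hℓ : Monotone ℓ) {i j : ι} (hji : j < i) :
    kraftOffset ℓ j < kraftOffset ℓ i / 2 ^ (ℓ i - ℓ j) := by
  rw [Nat.lt_iff_add_one_le, Nat.le_div_iff_mul_le (by positivity), kraftOffset_add_one,
    sum_mul]
  calc ∑ k ∈ Iic j, 2 ^ (ℓ j - ℓ k) * 2 ^ (ℓ i - ℓ j) = ∑ k ∈ Iic j, 2 ^ (ℓ i - ℓ k) := by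
        refine sum_congr rfl fun k hk => ?_
        have := hℓ (mem_Iic.1 hk)
        have := hℓ hji.le
        rw [← pow_add]
        congr 1
        omega
    _ ≤ kraftOffset ℓ i :=
        sum_le_sum_of_subset fun k hk => mem_Iio.2 ((mem_Iic.1 hk).trans_lt hji)

lemma eq_of_kraftCode_prefix (hℓ : Monotone ℓ) (h : ∀ i, ∑ j ∈ Iic i, (2 : ℝ≥0∞)⁻¹ ^ ℓ j ≤ 1)
    {a b : ι} (hab : kraftCode ℓ a <+: kraftCode ℓ b) : a = b := by
  have hlen : ℓ a ≤ ℓ b := by simpa [kraftCode] using hab.length_le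
  have hdiv := (fixedBits_prefix_fixedBits_iff hlen (kraftOffset_lt hℓ (h a))
    (kraftOffset_lt hℓ (h b))).1 hab
  rcases lt_trichotomy a b with hlt | heq | hgt
  · exact absurd hdiv (kraftOffset_lt_div hℓ hlt).ne
  · exact heq
  · have hlen' : ℓ a = ℓ b := hlen.antisymm (hℓ hgt.le)
    have := kraftOffset_lt_div hℓ hgt
    simp only [hlen', Nat.sub_self, pow_zero, Nat.div_one] at this hdiv
    omega

end KraftCode

lemma exists_prefixFree_code_of_tsum_inv_two_pow_le_one {ι : Type*} {ℓ : ι → ℕ}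
    (h : ∑' i, (2 : ℝ≥0∞)⁻¹ ^ ℓ i ≤ 1) :
    ∃ c : ι → List Bool, (∀ i j, c i <+: c j → i = j) ∧ ∀ i, (c i).length = ℓ i := by
  have hfin : ∀ n, {i | ℓ i ≤ n}.Finite := fun n =>
    (ENNReal.finite_const_le_of_tsum_ne_top (h.trans_lt ENNReal.one_lt_top).ne
      (ε := 2⁻¹ ^ n) (by simp)).subset fun i hi =>
        pow_le_pow_right_of_le_one' (ENNReal.inv_le_one.2 one_le_two) hi
  have : Countable ι := Set.countable_univ_iff.1 <|
    (Set.countable_iUnion fun n => (hfin n).countable).mono fun i _ =>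
      Set.mem_iUnion.2 ⟨ℓ i, le_refl (ℓ i)⟩
  obtain ⟨e, he⟩ := Countable.exists_injective_nat ι
  let _ : LinearOrder ι := LinearOrder.lift' (fun i => toLex (ℓ i, e i)) fun i j hij =>
    he (congrArg (fun p => (ofLex p).2) hij)
  have hℓ : Monotone ℓ := fun i j hij => Prod.Lex.monotone_fst _ _ hij
  let _ : LocallyFiniteOrderBot ι := LocallyFiniteOrderBot.ofIic ι
    (fun i => {j ∈ (hfin (ℓ i)).toFinset | j ≤ i}) fun i j => by
      simpa using fun hji => hℓ hji
  exact ⟨kraftCode ℓ,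
    fun a b => eq_of_kraftCode_prefix hℓ fun i => (ENNReal.sum_le_tsum _).trans h,
    fun i => length_fixedBits _ _⟩

/-- Kraft's inequality: `(ℓ_i)` is the length sequence of (the members of) a
prefix-free set iff `Σ 2^{-ℓ_i} ≤ 1`. -/
theorem stmt9 (ι : Type) (ℓ : ι → ℕ) :
    (∃ c : ι → List Bool, Function.Injective c ∧ PFree (Set.range c) ∧
        ∀ i : ι, (c i).length = ℓ i) ↔
      ∑' i : ι, ((2 : ℝ≥0∞))⁻¹ ^ (ℓ i) ≤ 1 := by
  constructor
  · rintro ⟨c, hinj, hpf, hlen⟩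
    calc ∑' i, (2 : ℝ≥0∞)⁻¹ ^ ℓ i
        = ∑' w : Set.range c, (2 : ℝ≥0∞)⁻¹ ^ (w : List Bool).length := by
          simp only [tsum_range (fun w : List Bool => (2 : ℝ≥0∞)⁻¹ ^ w.length) hinj, hlen]
      _ ≤ 1 := hpf.tsum_inv_two_pow_length_le_one
  · intro h
    obtain ⟨c, hc, hlen⟩ := exists_prefixFree_code_of_tsum_inv_two_pow_le_one h
    refine ⟨c, fun i j hij => hc i j (hij ▸ List.prefix_refl _), ?_, hlen⟩
    rintro _ ⟨i, rfl⟩ _ ⟨j, rfl⟩ hij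
    rw [hc i j hij]
end

section
/- Prefix-free complexity is subadditive: there exists k ∈ ℕ such that for all binary strings a, b, K(a ⋆ b) ≤ K(a) + K(b) + k. -/
open MeasureTheory
open scoped ENNReal

/-!
Let `L` be the machine that on input `p` searches, dovetailing over splittings `p = p₁ ++ p₂`
and step bounds, for a splitting on which `V` halts on both halves, and outputs
`V p₁ ++ V p₂`. Because `dom V` is prefix-free such a splitting is unique, so
`L (p ++ q) = V p ++ V q` whenever `V` halts on `p` and on `q`, and `dom L = dom V ⋆ dom V` is
again prefix-free. Concatenating shortest programs for `a` and `b` gives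
`K_L(a ++ b) ≤ K(a) + K(b)`, and universality of `V` against `L` supplies the constant.
-/

namespace PFree

variable {S : Set (List Bool)}

theorem eq_of_isPrefix_of_isPrefix (hS : PFree S) {a b c : List Bool} (ha : a ∈ S) (hb : b ∈ S)
    (hac : a <+: c) (hbc : b <+: c) : a = b :=
  (List.prefix_or_prefix_of_prefix hac hbc).elim (hS a ha b hb) fun h => (hS b hb a ha h).symm

theorem append_inj (hS : PFree S) {p₁ p₂ q₁ q₂ : List Bool} (hp : p₁ ∈ S)
    (hq : q₁ ∈ S) (h : p₁ ++ p₂ = q₁ ++ q₂) : p₁ = q₁ ∧ p₂ = q₂ := by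
  obtain rfl : p₁ = q₁ :=
    hS.eq_of_isPrefix_of_isPrefix hp hq (h ▸ List.prefix_append _ _) (List.prefix_append _ _)
  exact ⟨rfl, List.append_cancel_left h⟩

theorem image2_append (hS : PFree S) : PFree (Set.image2 (· ++ ·) S S) := by
  rintro _ ⟨p₁, hp₁, p₂, hp₂, rfl⟩ _ ⟨q₁, hq₁, q₂, hq₂, rfl⟩ hpq
  obtain rfl : p₁ = q₁ := hS.eq_of_isPrefix_of_isPrefix hp₁ hq₁
    ((List.prefix_append _ _).trans hpq) (List.prefix_append _ _)
  rw [hS p₂ hp₂ q₂ hq₂ ((List.prefix_append_right_inj p₁).mp hpq)]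

end PFree

open Encodable Nat.Partrec.Code

theorem Partrec.exists_code_eval_encode {α σ : Type*} [Primcodable α] [Primcodable σ]
    {f : α →. σ} (hf : Partrec f) :
    ∃ c : Nat.Partrec.Code, ∀ a, c.eval (encode a) = (f a).map encode := by
  obtain ⟨c, hc⟩ := exists_code.1 hf
  exact ⟨c, fun a => by simp [hc]⟩

namespace Nat.Partrec.Code

variable {α σ : Type*} [Primcodable α] [Primcodable σ]

def typedEvaln (c : Code) (n : ℕ) (a : α) : Option σ :=
  (evaln n c (encode a)).bind decode

theorem typedEvaln_primrec (c : Code) : Primrec₂ (typedEvaln (α := α) (σ := σ) c) :=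
  _root_.Primrec.option_bind
    (primrec_evaln.comp ((_root_.Primrec.fst.pair (_root_.Primrec.const c)).pair
      (_root_.Primrec.encode.comp _root_.Primrec.snd)))
    (_root_.Primrec.decode.comp _root_.Primrec.snd).to₂

theorem typedEvaln_mono {c : Code} {n m : ℕ} {a : α} {y : σ} (hnm : n ≤ m)
    (h : typedEvaln c n a = some y) : typedEvaln c m a = some y := by
  obtain ⟨x, hx, hy⟩ := Option.bind_eq_some_iff.mp h
  exact Option.bind_eq_some_iff.mpr ⟨x, evaln_mono hnm hx, hy⟩

variable {f : α →. σ} {c : Code}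

theorem mem_of_typedEvaln_eq_some (hc : ∀ a, c.eval (encode a) = (f a).map encode) {n : ℕ}
    {a : α} {y : σ} (h : typedEvaln c n a = some y) : y ∈ f a := by
  obtain ⟨x, hx, hy⟩ := Option.bind_eq_some_iff.mp h
  obtain ⟨y', hy', rfl⟩ := (Part.mem_map_iff _).mp (hc a ▸ evaln_sound hx)
  rw [encodek, Option.some_inj] at hy
  exact hy ▸ hy'

theorem exists_typedEvaln_eq_some (hc : ∀ a, c.eval (encode a) = (f a).map encode) {a : α}
    {y : σ} (h : y ∈ f a) : ∃ n, typedEvaln c n a = some y := by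
  obtain ⟨n, hn⟩ := evaln_complete.mp (hc a ▸ Part.mem_map encode h)
  exact ⟨n, by simp [typedEvaln, Option.mem_def.mp hn, encodek]⟩

end Nat.Partrec.Code

open Nat.Partrec (Code)

def runConcat (c : Code) (s : ℕ) (pq : List Bool × List Bool) : Option (List Bool) :=
  (typedEvaln c s pq.1).bind fun a => (typedEvaln c s pq.2).map (a ++ ·)

-- `n` codes a step bound `n.unpair.1` and a candidate splitting `n.unpair.2` of `p`.
def concatStage (c : Code) (p : List Bool) (n : ℕ) : Option (List Bool) :=
  (decode (α := List Bool × List Bool) n.unpair.2).bind fun pq =>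
    if pq.1 ++ pq.2 = p then runConcat c n.unpair.1 pq else none

def concatMachine (c : Code) : List Bool →. List Bool :=
  fun p => Nat.rfindOpt (concatStage c p)

open Primrec in
theorem runConcat_primrec (c : Code) : Primrec₂ (runConcat c) :=
  option_bind ((typedEvaln_primrec c).comp fst (fst.comp snd))
    (option_map ((typedEvaln_primrec c).comp (fst.comp fst) (snd.comp (snd.comp fst)))
      (list_append.comp (snd.comp fst) snd).to₂).to₂

open Primrec in
theorem concatStage_primrec (c : Code) : Primrec₂ (concatStage c) :=
  option_bind (Primrec.decode.comp (snd.comp (unpair.comp snd)))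
    (ite (Primrec.eq.comp (list_append.comp (fst.comp snd) (snd.comp snd)) (fst.comp fst))
      ((runConcat_primrec c).comp (fst.comp (unpair.comp (snd.comp fst))) snd)
      (const none)).to₂

theorem concatMachine_partrec (c : Code) : Partrec (concatMachine c) :=
  Partrec.rfindOpt (concatStage_primrec c).to_comp

variable {V : List Bool →. List Bool} {c : Code}

theorem exists_of_concatStage_eq_some (hc : ∀ p, c.eval (encode p) = (V p).map encode)
    {p x : List Bool} {n : ℕ} (h : concatStage c p n = some x) :
    ∃ p₁ p₂, p₁ ++ p₂ = p ∧ ∃ a ∈ V p₁, ∃ b ∈ V p₂, x = a ++ b := by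
  obtain ⟨⟨p₁, p₂⟩, -, h⟩ := Option.bind_eq_some_iff.mp h
  split_ifs at h with hp
  obtain ⟨a, ha, h⟩ := Option.bind_eq_some_iff.mp h
  obtain ⟨b, hb, rfl⟩ := Option.map_eq_some_iff.mp h
  exact ⟨p₁, p₂, hp, a, mem_of_typedEvaln_eq_some hc ha, b, mem_of_typedEvaln_eq_some hc hb,
    rfl⟩

theorem exists_concatStage_eq_some (hc : ∀ p, c.eval (encode p) = (V p).map encode)
    {p₁ p₂ a b : List Bool} (ha : a ∈ V p₁) (hb : b ∈ V p₂) :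
    ∃ n, concatStage c (p₁ ++ p₂) n = some (a ++ b) := by
  obtain ⟨s₁, hs₁⟩ := exists_typedEvaln_eq_some hc ha
  obtain ⟨s₂, hs₂⟩ := exists_typedEvaln_eq_some hc hb
  refine ⟨Nat.pair (max s₁ s₂) (encode (p₁, p₂)), ?_⟩
  simp [concatStage, runConcat, typedEvaln_mono (le_max_left _ _) hs₁,
    typedEvaln_mono (le_max_right _ _) hs₂]

theorem concatMachine_dom (hc : ∀ p, c.eval (encode p) = (V p).map encode) :
    {p | (concatMachine c p).Dom} = Set.image2 (· ++ ·) {p | (V p).Dom} {p | (V p).Dom} := by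
  ext p
  simp only [concatMachine, Nat.rfindOpt_dom, Set.mem_ofPred_eq, Set.mem_image2]
  constructor
  · rintro ⟨n, x, hx⟩
    obtain ⟨p₁, p₂, rfl, a, ha, b, hb, -⟩ := exists_of_concatStage_eq_some hc hx
    exact ⟨p₁, Part.dom_iff_mem.mpr ⟨a, ha⟩, p₂, Part.dom_iff_mem.mpr ⟨b, hb⟩, rfl⟩
  · rintro ⟨p₁, h₁, p₂, h₂, rfl⟩
    obtain ⟨n, hn⟩ := exists_concatStage_eq_some hc (Part.get_mem h₁) (Part.get_mem h₂)
    exact ⟨n, _, hn⟩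

theorem concatMachine_pFree (hc : ∀ p, c.eval (encode p) = (V p).map encode)
    (hV : PFree {p | (V p).Dom}) : PFree {p | (concatMachine c p).Dom} :=
  concatMachine_dom hc ▸ hV.image2_append

theorem append_mem_concatMachine (hc : ∀ p, c.eval (encode p) = (V p).map encode)
    (hV : PFree {p | (V p).Dom}) {p q a b : List Bool} (ha : a ∈ V p) (hb : b ∈ V q) :
    a ++ b ∈ concatMachine c (p ++ q) := by
  obtain ⟨n, hn⟩ := exists_concatStage_eq_some hc ha hb
  obtain ⟨y, hy⟩ := Part.dom_iff_mem.mp (Nat.rfindOpt_dom.mpr ⟨n, _, hn⟩)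
  obtain ⟨m, hm⟩ := Nat.rfindOpt_spec hy
  obtain ⟨p₁, p₂, hpq, a', ha', b', hb', rfl⟩ := exists_of_concatStage_eq_some hc hm
  -- prefix-freeness forces the splitting found by the search to be `p ++ q`
  obtain ⟨rfl, rfl⟩ :=
    hV.append_inj (Part.dom_iff_mem.mpr ⟨a', ha'⟩) (Part.dom_iff_mem.mpr ⟨a, ha⟩) hpq
  rwa [Part.mem_unique ha' ha, Part.mem_unique hb' hb] at hy

theorem Cpx_le_length {M : List Bool →. List Bool} {p b : List Bool} (h : b ∈ M p) :
    Cpx M b ≤ p.length :=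
  sInf_le ⟨p, h, rfl⟩

theorem exists_mem_length_eq_Cpx {M : List Bool →. List Bool} {b : List Bool}
    (h : Cpx M b ≠ ⊤) :
    ∃ p, b ∈ M p ∧ (p.length : ℕ∞) = Cpx M b :=
  csInf_mem (s := {n : ℕ∞ | ∃ p : List Bool, b ∈ M p ∧ (p.length : ℕ∞) = n})
    (Set.nonempty_iff_ne_empty.mpr fun he => h (by rw [Cpx, he, sInf_empty]))

theorem Cpx_append_le {V L : List Bool →. List Bool}
    (hL : ∀ {p q a b}, a ∈ V p → b ∈ V q → a ++ b ∈ L (p ++ q)) (a b : List Bool) :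
    Cpx L (a ++ b) ≤ Cpx V a + Cpx V b := by
  rcases eq_or_ne (Cpx V a) ⊤ with ha | ha
  · simp [ha]
  rcases eq_or_ne (Cpx V b) ⊤ with hb | hb
  · simp [hb]
  obtain ⟨p, hp, hpa⟩ := exists_mem_length_eq_Cpx ha
  obtain ⟨q, hq, hqb⟩ := exists_mem_length_eq_Cpx hb
  calc Cpx L (a ++ b) ≤ (p ++ q).length := Cpx_le_length (hL hp hq)
    _ = Cpx V a + Cpx V b := by rw [List.length_append, Nat.cast_add, hpa, hqb]

/-- Prefix-free complexity is subadditive: `K(a ⋆ b) ≤ K(a) + K(b) + k`. -/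
theorem stmt11 (V : List Bool →. List Bool) (hV : PFUniversal V) :
    ∃ k : ℕ, ∀ a b : List Bool, Cpx V (a ++ b) ≤ Cpx V a + Cpx V b + (k : ℕ∞) := by
  obtain ⟨hVpr, hVpf, hVuniv⟩ := hV
  obtain ⟨c, hc⟩ := hVpr.exists_code_eval_encode
  obtain ⟨k, hk⟩ :=
    hVuniv (concatMachine c) (concatMachine_partrec c) (concatMachine_pFree hc hVpf)
  refine ⟨k, fun a b => ?_⟩
  calc Cpx V (a ++ b) ≤ Cpx (concatMachine c) (a ++ b) + k := hk _
    _ ≤ Cpx V a + Cpx V b + k := by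
      gcongr
      exact Cpx_append_le (append_mem_concatMachine hc hVpf) a b
end

section
/- Ω is Kolmogorov random: there exists a constant k such that for all n, K(Ω[n]) > n - k, where Ω[n] denotes the first n bits of Ω and K is prefix-free Kolmogorov complexity. Hence reals that are random in the sense of Kolmogorov exist. -/
/-!
Chaitin's argument. From `V` one builds a machine `M` that, on an input `q` with `V q = σ`,
enumerates the halting programs of `V` until their total weight `∑ 2^{-|p|}` exceeds the
dyadic value of `σ`, and then prints a string `x` longer than every output seen so far. The
domain of `M` lies inside that of `V`, so `M` is prefix-free and universality gives
`K(x) ≤ K_M(x) + k ≤ K(σ) + k`. If `σ = Ω[n]`, every halting program of length `≤ n` has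
already appeared at that stage (a missing one would push the weight past
`sval σ + 2^{-n} ≥ Ω`), so no program of length `≤ n` prints `x`, i.e. `n < K(x)`.
-/


open MeasureTheory
open scoped ENNReal

open Nat.Partrec (Code)
open Nat.Partrec.Code Encodable Filter

theorem PFree.mono {S T : Set (List Bool)} (hST : S ⊆ T) (hT : PFree T) : PFree S :=
  fun a ha b hb hab => hT a (hST ha) b (hST hb) hab

theorem Cpx_le_Cpx_of_forall_mem {M N : List Bool →. List Bool} {x y : List Bool}
    (h : ∀ q, y ∈ N q → x ∈ M q) : Cpx M x ≤ Cpx N y :=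
  le_sInf fun _ ⟨q, hq, hlen⟩ => sInf_le ⟨q, h q hq, hlen⟩

theorem lt_Cpx_of_forall_mem {M : List Bool →. List Bool} {x : List Bool} {n : ℕ}
    (h : ∀ p, x ∈ M p → n < p.length) : (n : ℕ∞) < Cpx M x := by
  rw [← ENat.add_one_le_iff (ENat.natCast_ne_top n)]
  refine le_sInf ?_
  rintro _ ⟨p, hp, rfl⟩
  exact_mod_cast h p hp

def dyadicNum : List Bool → ℕ
  | [] => 0
  | a :: l => a.toNat * 2 ^ l.length + dyadicNum l

theorem sval_cons (a : Bool) (l : List Bool) : sval (a :: l) = (a.toNat + sval l) / 2 := by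
  simp only [sval, List.length_cons, Fin.sum_univ_succ, List.get_eq_getElem, Fin.val_succ,
    List.getElem_cons_succ, add_div, Finset.sum_div]
  congr 1
  · cases a <;> simp
  · refine Finset.sum_congr rfl fun i _ => ?_
    split_ifs <;> simp [pow_succ, div_eq_mul_inv]

theorem sval_eq_dyadicNum_div (b : List Bool) : sval b = dyadicNum b / 2 ^ b.length := by
  induction b with
  | nil => simp [sval, dyadicNum]
  | cons a l ih =>
    rw [sval_cons, ih, dyadicNum, List.length_cons]
    push_cast
    field_simp
    ring

theorem sval_nonneg (b : List Bool) : 0 ≤ sval b := by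
  rw [sval_eq_dyadicNum_div]; positivity

theorem sval_lt_div_iff {σ : List Bool} {w s : ℕ} :
    sval σ < w / 2 ^ s ↔ dyadicNum σ * 2 ^ s < w * 2 ^ σ.length := by
  rw [sval_eq_dyadicNum_div, div_lt_div_iff₀ (by positivity) (by positivity)]
  norm_cast

section Primrec

open Primrec

theorem Primrec.nat_pow : Primrec₂ ((· ^ ·) : ℕ → ℕ → ℕ) :=
  Primrec₂.unpaired'.1 Nat.Primrec.pow

theorem Primrec.list_sum_nat : Primrec (List.sum : List ℕ → ℕ) :=
  list_foldr .id (const 0) (nat_add.comp (fst.comp snd) (snd.comp snd)).to₂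

theorem Primrec.list_replicate {β : Type*} [Primcodable β] (b : β) :
    Primrec fun n => List.replicate n b :=
  (list_map list_range (const b).to₂).of_eq fun n => by simp

theorem primrec_dyadicNum : Primrec dyadicNum :=
  (list_rec .id (const 0) (nat_add.comp (nat_mul.comp
      (dom_bool Bool.toNat |>.comp (fst.comp snd))
      (nat_pow.comp (const 2) (list_length.comp (fst.comp (snd.comp snd)))))
    (snd.comp (snd.comp snd))).to₂).of_eq fun σ => by
    induction σ with
    | nil => rfl
    | cons a l ih => simp [dyadicNum, ← ih]

end Primrec

namespace Chaitin

def stage (c : Code) (s : ℕ) : List (List Bool) :=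
  ((List.range s).filterMap (decode₂ (List Bool))).filter fun p => (evaln s c (encode p)).isSome

theorem mem_stage {c : Code} {s : ℕ} {p : List Bool} :
    p ∈ stage c s ↔ (evaln s c (encode p)).isSome := by
  simp only [stage, List.mem_filter, List.mem_filterMap, List.mem_range, and_iff_right_iff_imp]
  intro h
  obtain ⟨v, hv⟩ := Option.isSome_iff_exists.1 h
  exact ⟨_, evaln_bound hv, mem_decode₂.2 rfl⟩

theorem nodup_stage (c : Code) (s : ℕ) : (stage c s).Nodup :=
  (List.nodup_range.filterMap fun _ _ _ hk hk' =>
    (mem_decode₂.1 hk).symm.trans (mem_decode₂.1 hk')).filter _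

theorem length_le_of_mem_stage {c : Code} {s : ℕ} {p : List Bool} (hp : p ∈ stage c s) :
    p.length ≤ s := by
  obtain ⟨v, hv⟩ := Option.isSome_iff_exists.1 (mem_stage.1 hp)
  exact (length_le_encode p).trans (evaln_bound hv).le

def stageWeight (c : Code) (s : ℕ) : ℕ := ((stage c s).map fun p => 2 ^ (s - p.length)).sum

theorem stageWeight_div (c : Code) (s : ℕ) :
    (stageWeight c s : ℝ) / 2 ^ s
      = ∑ p ∈ (stage c s).toFinset, (2 : ℝ)⁻¹ ^ p.length := by
  rw [stageWeight, ← List.sum_toFinset _ (nodup_stage c s), Nat.cast_sum, Finset.sum_div]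
  refine Finset.sum_congr rfl fun p hp => ?_
  rw [Nat.cast_pow, Nat.cast_ofNat,
    pow_sub₀ _ two_ne_zero (length_le_of_mem_stage (List.mem_toFinset.1 hp)), inv_pow]
  field_simp

def stageOutputs (c : Code) (s : ℕ) : List ℕ := (List.range s).filterMap (evaln s c)

def freshString (c : Code) (s : ℕ) : List Bool :=
  List.replicate ((stageOutputs c s).sum + 1) true

def Computes (c : Code) (V : List Bool →. List Bool) : Prop :=
  ∀ p, c.eval (encode p) = (V p).map encode

theorem exists_computes {V : List Bool →. List Bool} (hV : Partrec V) : ∃ c, Computes c V := by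
  obtain ⟨c, hc⟩ := Nat.Partrec.Code.exists_code.1 hV
  exact ⟨c, fun p => by simp [hc, encodek]⟩

namespace Computes

variable {c : Code} {V : List Bool →. List Bool} {s : ℕ} {p : List Bool}

theorem exists_mem_of_evaln_eq_some (hc : Computes c V) {v : ℕ}
    (h : evaln s c (encode p) = some v) : ∃ y ∈ V p, encode y = v := by
  simpa [hc p] using evaln_sound h

theorem dom_of_mem_stage (hc : Computes c V) (hp : p ∈ stage c s) : (V p).Dom := by
  obtain ⟨v, hv⟩ := Option.isSome_iff_exists.1 (mem_stage.1 hp)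
  obtain ⟨y, hy, -⟩ := hc.exists_mem_of_evaln_eq_some hv
  exact Part.dom_iff_mem.2 ⟨y, hy⟩

theorem eventually_mem_stage (hc : Computes c V) (hp : (V p).Dom) :
    ∀ᶠ s in atTop, p ∈ stage c s := by
  obtain ⟨y, hy⟩ := Part.dom_iff_mem.1 hp
  obtain ⟨s₀, hs₀⟩ := evaln_complete.1 (hc p ▸ Part.mem_map encode hy)
  exact eventually_atTop.2 ⟨s₀, fun s hs =>
    mem_stage.2 (Option.isSome_iff_exists.2 ⟨_, evaln_mono hs hs₀⟩)⟩

theorem length_lt_freshString (hc : Computes c V) (hp : p ∈ stage c s) {y : List Bool}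
    (hy : y ∈ V p) : y.length < (freshString c s).length := by
  obtain ⟨v, hv⟩ := Option.isSome_iff_exists.1 (mem_stage.1 hp)
  obtain ⟨y', hy', rfl⟩ := hc.exists_mem_of_evaln_eq_some hv
  obtain rfl := Part.mem_unique hy hy'
  have hout : encode y ∈ stageOutputs c s :=
    List.mem_filterMap.2 ⟨encode p, List.mem_range.2 (evaln_bound hv), hv⟩
  calc y.length ≤ encode y := length_le_encode y
    _ ≤ (stageOutputs c s).sum := List.le_sum_of_mem hout
    _ < (freshString c s).length := by simp [freshString]

end Computes

section Omega

variable {V : List Bool →. List Bool}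

theorem summable_of_Omega_pos (h : 0 < Omega V) :
    Summable fun p : {p : List Bool // (V p).Dom} => (2 : ℝ)⁻¹ ^ p.1.length := by
  by_contra hs
  rw [Omega, tsum_eq_zero_of_not_summable hs] at h
  exact h.false

theorem sum_le_Omega
    (hsum : Summable fun p : {p : List Bool // (V p).Dom} => (2 : ℝ)⁻¹ ^ p.1.length)
    {A : Finset (List Bool)} (hA : ∀ p ∈ A, (V p).Dom) :
    ∑ p ∈ A, (2 : ℝ)⁻¹ ^ p.length ≤ Omega V := by
  classical
  rw [← Finset.sum_subtype_of_mem _ hA]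
  exact hsum.sum_le_tsum _ (fun _ _ => by positivity)

variable {c : Code}

theorem stageWeight_div_add_le_Omega (hc : Computes c V)
    (hsum : Summable fun p : {p : List Bool // (V p).Dom} => (2 : ℝ)⁻¹ ^ p.1.length)
    {s : ℕ} {p : List Bool} (hp : (V p).Dom) (hps : p ∉ stage c s) :
    (stageWeight c s : ℝ) / 2 ^ s + (2 : ℝ)⁻¹ ^ p.length ≤ Omega V := by
  rw [stageWeight_div, add_comm,
    ← Finset.sum_insert (f := fun q : List Bool => (2 : ℝ)⁻¹ ^ q.length)
      (mt List.mem_toFinset.1 hps)]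
  refine sum_le_Omega hsum fun q hq => ?_
  rcases Finset.mem_insert.1 hq with rfl | hq
  · exact hp
  · exact hc.dom_of_mem_stage (List.mem_toFinset.1 hq)

theorem exists_lt_stageWeight_div (hc : Computes c V)
    (hsum : Summable fun p : {p : List Bool // (V p).Dom} => (2 : ℝ)⁻¹ ^ p.1.length)
    {r : ℝ} (hr : r < Omega V) : ∃ s, r < (stageWeight c s : ℝ) / 2 ^ s := by
  by_contra! h
  refine hr.not_ge (hsum.tsum_le_of_sum_le fun F => ?_)
  obtain ⟨s, hs⟩ :=
    ((eventually_all_finset F).2 fun p _ => hc.eventually_mem_stage p.2).exists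
  calc ∑ p ∈ F, (2 : ℝ)⁻¹ ^ p.1.length
      = ∑ p ∈ F.map (Function.Embedding.subtype _), (2 : ℝ)⁻¹ ^ p.length := by
        rw [Finset.sum_map]; rfl
    _ ≤ ∑ p ∈ (stage c s).toFinset, (2 : ℝ)⁻¹ ^ p.length := by
        refine Finset.sum_le_sum_of_subset_of_nonneg ?_ fun _ _ _ => by positivity
        intro p hp
        obtain ⟨q, hq, rfl⟩ := Finset.mem_map.1 hp
        exact List.mem_toFinset.2 (hs q hq)
    _ = (stageWeight c s : ℝ) / 2 ^ s := (stageWeight_div c s).symm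
    _ ≤ r := h s

theorem mem_stage_of_Omega_le (hc : Computes c V)
    (hsum : Summable fun p : {p : List Bool // (V p).Dom} => (2 : ℝ)⁻¹ ^ p.1.length)
    {σ p : List Bool} {s : ℕ} (hs : sval σ < (stageWeight c s : ℝ) / 2 ^ s)
    (hΩ : Omega V ≤ sval σ + (2 : ℝ)⁻¹ ^ σ.length) (hp : (V p).Dom)
    (hpσ : p.length ≤ σ.length) : p ∈ stage c s := by
  by_contra hps
  have hmiss := stageWeight_div_add_le_Omega hc hsum hp hps
  have hpow : (2 : ℝ)⁻¹ ^ σ.length ≤ (2 : ℝ)⁻¹ ^ p.length :=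
    pow_le_pow_of_le_one (by norm_num) (by norm_num) hpσ
  linarith

end Omega

def omegaSearch (c : Code) (σ : List Bool) (s : ℕ) : Option (List Bool) :=
  if dyadicNum σ * 2 ^ s < stageWeight c s * 2 ^ σ.length then some (freshString c s) else none

def chaitinMachine (V : List Bool →. List Bool) (c : Code) : List Bool →. List Bool :=
  fun q => (V q).bind fun σ => Nat.rfindOpt (omegaSearch c σ)

section Primrec

open Primrec

variable (c : Code)

theorem primrec_evaln_code : Primrec₂ fun s k => evaln s c k :=
  primrec_evaln.comp (pair (pair fst (const c)) snd)

theorem primrec_stage : Primrec (stage c) :=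
  ((PrimrecRel.listFilter (R := fun p s => (evaln s c (encode p)).isSome = true)
      (Primrec.eq.comp (option_isSome.comp ((primrec_evaln_code c).comp snd
        (encode_iff.2 fst))) (const true))).comp
    (listFilterMap list_range (Primrec.decode₂.comp snd).to₂) .id).of_eq fun s => by
    simp [stage]

theorem primrec_stageWeight : Primrec (stageWeight c) :=
  list_sum_nat.comp (list_map (primrec_stage c)
    (nat_pow.comp (const 2) (nat_sub.comp fst (list_length.comp snd))).to₂)

theorem primrec_freshString : Primrec (freshString c) :=
  (list_replicate true).comp (succ.comp (list_sum_nat.comp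
    (listFilterMap list_range (primrec_evaln_code c))))

theorem primrec_omegaSearch : Primrec₂ (omegaSearch c) :=
  ite (nat_lt.comp (nat_mul.comp (primrec_dyadicNum.comp fst) (nat_pow.comp (const 2) snd))
      (nat_mul.comp ((primrec_stageWeight c).comp snd)
        (nat_pow.comp (const 2) (list_length.comp fst))))
    (option_some.comp ((primrec_freshString c).comp snd)) (const none)

end Primrec

theorem chaitinMachine_partrec {V : List Bool →. List Bool} (hV : Partrec V) (c : Code) :
    Partrec (chaitinMachine V c) :=
  hV.bind (Partrec.rfindOpt
    ((primrec_omegaSearch c).comp (Primrec.snd.comp Primrec.fst) Primrec.snd).to_comp)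

theorem dom_chaitinMachine_subset (V : List Bool →. List Bool) (c : Code) :
    {q | (chaitinMachine V c q).Dom} ⊆ {q | (V q).Dom} :=
  fun _ h => h.fst

theorem exists_freshString_mem_chaitinMachine {V : List Bool →. List Bool} {c : Code}
    (hc : Computes c V)
    (hsum : Summable fun p : {p : List Bool // (V p).Dom} => (2 : ℝ)⁻¹ ^ p.1.length)
    {σ : List Bool} (hσ : sval σ < Omega V) :
    ∃ s, sval σ < (stageWeight c s : ℝ) / 2 ^ s ∧
      ∀ q, σ ∈ V q → freshString c s ∈ chaitinMachine V c q := by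
  obtain ⟨s₀, hs₀⟩ := exists_lt_stageWeight_div hc hsum hσ
  have hdom : (Nat.rfindOpt (omegaSearch c σ)).Dom :=
    Nat.rfindOpt_dom.2
      ⟨s₀, freshString c s₀, by simp [omegaSearch, sval_lt_div_iff.1 hs₀]⟩
  obtain ⟨s, hs⟩ := Nat.rfindOpt_spec (Part.get_mem hdom)
  unfold omegaSearch at hs
  split_ifs at hs with hlt
  · refine ⟨s, sval_lt_div_iff.2 hlt, fun q hq => Part.mem_bind_iff.2 ⟨σ, hq, ?_⟩⟩
    rw [Option.mem_some_iff.1 hs]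
    exact Part.get_mem hdom
  · exact absurd hs (Option.not_mem_none _)

theorem length_lt_of_freshString_mem {V : List Bool →. List Bool} {c : Code}
    (hc : Computes c V)
    (hsum : Summable fun p : {p : List Bool // (V p).Dom} => (2 : ℝ)⁻¹ ^ p.1.length)
    {σ p : List Bool} {s : ℕ} (hs : sval σ < (stageWeight c s : ℝ) / 2 ^ s)
    (hΩ : Omega V ≤ sval σ + (2 : ℝ)⁻¹ ^ σ.length) (hp : freshString c s ∈ V p) :
    σ.length < p.length := by
  by_contra! hpσ
  have hps := mem_stage_of_Omega_le hc hsum hs hΩ (Part.dom_iff_mem.2 ⟨_, hp⟩) hpσ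
  exact (hc.length_lt_freshString hps hp).false

end Chaitin

open Chaitin

/-- Here `b` with `|b| = n`, `sval b < Ω ≤ sval b + 2^{-n}` is the length-`n` initial
segment of the binary expansion of `Ω` (trailing-1's convention). -/
theorem stmt15 (V : List Bool →. List Bool) (hV : PFUniversal V) :
    ∃ k : ℕ, ∀ (n : ℕ) (b : List Bool), b.length = n →
      sval b < Omega V → Omega V ≤ sval b + ((2 : ℝ))⁻¹ ^ n →
        (n : ℕ∞) < Cpx V b + (k : ℕ∞) := by
  obtain ⟨hVrec, hVfree, hVuniv⟩ := hV
  obtain ⟨c, hc⟩ := exists_computes hVrec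
  obtain ⟨k, hk⟩ := hVuniv (chaitinMachine V c) (chaitinMachine_partrec hVrec c)
    (hVfree.mono (dom_chaitinMachine_subset V c))
  refine ⟨k, fun n b hbn hlo hhi => ?_⟩
  subst hbn
  have hsum := summable_of_Omega_pos ((sval_nonneg b).trans_lt hlo)
  obtain ⟨s, hs, hmem⟩ := exists_freshString_mem_chaitinMachine hc hsum hlo
  calc (b.length : ℕ∞) < Cpx V (freshString c s) :=
        lt_Cpx_of_forall_mem fun p hp => length_lt_of_freshString_mem hc hsum hs hhi hp
    _ ≤ Cpx (chaitinMachine V c) (freshString c s) + k := hk _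
    _ ≤ Cpx V b + k := by gcongr; exact Cpx_le_Cpx_of_forall_mem hmem
end

section
/- The two formulations of Martin-Löf randomness coincide: an infinite binary sequence x passes every Martin-Löf test in sense 1 (every partial computable t : B → ℕ with Pr{b : t(b)↓ ≥ m} ≤ 2^{-m} for all m, passing meaning {t(x[n]) : t(x[n])↓} is bounded) if and only if x passes every Martin-Löf test in sense 2 (every total computable f : ℕ → ℕ with Pr(O(W_{f(n)})) ≤ 2^{-n} for all n, passing meaning x ∉ ⋂_n O(W_{f(n)})). -/
open MeasureTheory
open scoped ENNReal

/-!
A sense-1 test `t` yields the uniformly c.e. sets `{b | t b ≥ m}` of measure `≤ 2⁻ᵐ`, and `x` lies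
in all their cylinders exactly when the values of `t` along `x` are unbounded.

Conversely, enumerate the sets `W (f k)` of a sense-2 test in stages, and let the level of a
string `b` be the largest `m ≤ |b|` such that by stage `|b|` every `W (f k)` with `k ≤ m` has
enumerated a prefix of `b`. The level is total computable; a level `≥ m > 0` puts `b` above an
element of `W (f m)`, so it is a sense-1 test; and if `x` fails `f`, every finite batch of the
witnesses is seen at some long enough prefix of `x`, so the level along `x` is unbounded.
-/

open Nat.Partrec (Code)
open Nat.Partrec.Code Encodable

@[simp]
theorem pref_length (x : ℕ → Bool) (n : ℕ) : (pref x n).length = n := by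
  simp [pref]

theorem take_pref (x : ℕ → Bool) {m n : ℕ} (h : m ≤ n) : (pref x n).take m = pref x m :=
  List.ext_getElem (by simp [h]) fun i _ _ => by simp [pref]

theorem mem_cyl_iff {S : Set (List Bool)} {x : ℕ → Bool} : x ∈ cyl S ↔ ∃ n, pref x n ∈ S :=
  ⟨fun ⟨b, hb, hx⟩ => ⟨b.length, hx.symm ▸ hb⟩, fun ⟨n, hn⟩ => ⟨pref x n, hn, by simp⟩⟩

theorem cyl_mono {S T : Set (List Bool)} (h : S ⊆ T) : cyl S ⊆ cyl T :=
  fun _ ⟨b, hb, hx⟩ => ⟨b, h hb, hx⟩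

theorem cyl_setOf_prefix_subset (S : Set (List Bool)) : cyl {b | ∃ p ∈ S, p <+: b} ⊆ cyl S := by
  rintro x ⟨b, ⟨p, hp, hpb⟩, hx⟩
  refine ⟨p, hp, ?_⟩
  rw [← take_pref x (m := p.length) (n := b.length) (by simpa using hpb.length_le), hx,
    ← List.prefix_iff_eq_take.mp hpb]

theorem measurable_binSeq : Measurable binSeq :=
  measurable_pi_lambda _ fun n =>
    (Measurable.of_discrete (f := fun z : ℤ => decide (z % 2 = 1))).comp
      (Int.measurable_floor.comp (measurable_id.mul_const (2 ^ (n + 1))))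

instance : IsProbabilityMeasure coin :=
  have : IsProbabilityMeasure (volume.restrict (Set.Ioc (0 : ℝ) 1)) := ⟨by simp⟩
  Measure.isProbabilityMeasure_map measurable_binSeq.aemeasurable

theorem Partrec.exists_code_dom {α σ : Type*} [Primcodable α] [Primcodable σ] {g : α →. σ}
    (hg : Partrec g) : ∃ c : Code, ∀ a, (eval c (encode a)).Dom ↔ (g a).Dom := by
  obtain ⟨c, hc⟩ := exists_code.mp hg
  exact ⟨c, fun a => by simp [hc]⟩

theorem Partrec.exists_primrec_stage {α σ : Type*} [Primcodable α] [Primcodable σ] {g : α →. σ}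
    (hg : Partrec g) :
    ∃ A : ℕ → α → Bool, Primrec₂ A ∧ (∀ a, (g a).Dom ↔ ∃ s, A s a) ∧
      ∀ a {s s'}, s ≤ s' → A s a → A s' a := by
  obtain ⟨c, hc⟩ := hg.exists_code_dom
  refine ⟨fun s a => (evaln s c (encode a)).isSome, ?_, fun a => ?_, fun a s s' hs h => ?_⟩
  · exact Primrec.option_isSome.comp <| primrec_evaln.comp <|
      (Primrec.fst.pair (Primrec.const c)).pair (Primrec.encode.comp Primrec.snd)
  · rw [← hc a, Part.dom_iff_mem]
    simp only [evaln_complete, Option.isSome_iff_exists]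
    exact ⟨fun ⟨y, s, h⟩ => ⟨s, y, h⟩, fun ⟨s, y, h⟩ => ⟨y, s, h⟩⟩
  · obtain ⟨y, hy⟩ := Option.isSome_iff_exists.mp h
    exact Option.isSome_iff_exists.mpr ⟨y, evaln_mono hs hy⟩

theorem Partrec₂.exists_computable_W_eq {σ : Type*} [Primcodable σ] {g : ℕ → List Bool →. σ}
    (hg : Partrec₂ g) : ∃ f : ℕ → ℕ, Computable f ∧ ∀ m, W (f m) = {b | (g m b).Dom} := by
  obtain ⟨c, hc⟩ := Partrec.exists_code_dom hg
  refine ⟨fun m => encode (curry c m), ?_, fun m => Set.ext fun b => ?_⟩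
  · exact (Primrec.encode.comp (primrec₂_curry.comp (Primrec.const c) Primrec.id)).to_comp
  · simpa [W, eval_curry] using hc (m, b)

def seenLevel (A : ℕ → ℕ × List Bool → Bool) (b : List Bool) : ℕ :=
  Nat.findGreatest (fun m => ∀ k ≤ m, ∃ i ≤ b.length, A b.length (k, b.take i)) b.length

open Primrec in
theorem primrec_seenLevel {A : ℕ → ℕ × List Bool → Bool} (hA : Primrec₂ A) :
    Primrec (seenLevel A) := by
  have hseen : PrimrecRel fun (i : ℕ) (q : ℕ × List Bool) => A q.2.length (q.1, q.2.take i) :=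
    Primrec.eq.comp (hA.comp (list_length.comp (snd.comp snd))
      ((fst.comp snd).pair (list_take.comp fst (snd.comp snd)))) (const true)
  have hex : PrimrecRel fun (k : ℕ) (b : List Bool) =>
      ∃ i ∈ List.range (b.length + 1), A b.length (k, b.take i) :=
    hseen.exists_mem_list.comp (list_range.comp (succ.comp (list_length.comp snd))) .id
  have hall : PrimrecRel fun (b : List Bool) (m : ℕ) =>
      ∀ k ∈ List.range (m + 1), ∃ i ∈ List.range (b.length + 1), A b.length (k, b.take i) :=
    hex.forall_mem_list.comp (list_range.comp (succ.comp snd)) fst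
  refine nat_findGreatest list_length (hall.of_eq fun b m => ?_)
  simp only [List.mem_range, Nat.lt_add_one_iff]

section seenLevel

variable {A : ℕ → ℕ × List Bool → Bool} {U : ℕ → Set (List Bool)}

theorem exists_prefix_mem_of_le_seenLevel (hsound : ∀ s k p, A s (k, p) → p ∈ U k)
    {b : List Bool} {m : ℕ} (hm : 0 < m) (h : m ≤ seenLevel A b) : ∃ p ∈ U m, p <+: b := by
  obtain ⟨i, -, hi⟩ := Nat.findGreatest_of_ne_zero rfl (by omega : seenLevel A b ≠ 0) m h
  exact ⟨_, hsound _ _ _ hi, List.take_prefix i b⟩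

theorem exists_le_seenLevel_pref (hcomplete : ∀ k p, p ∈ U k → ∃ s, A s (k, p))
    (hmono : ∀ a {s s'}, s ≤ s' → A s a → A s' a) {x : ℕ → Bool} (hx : ∀ k, x ∈ cyl (U k))
    (B : ℕ) : ∃ n, B ≤ seenLevel A (pref x n) := by
  have hseen : ∀ k, ∃ n s, A s (k, pref x n) := fun k => by
    obtain ⟨n, hn⟩ := mem_cyl_iff.mp (hx k)
    exact ⟨n, hcomplete k _ hn⟩
  choose len stage hstage using hseen
  let N := B + ∑ k ∈ Finset.range (B + 1), (len k + stage k)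
  have hle : ∀ k ≤ B, len k + stage k ≤ N := fun k hk =>
    le_add_left <| Finset.single_le_sum (f := fun k => len k + stage k)
      (fun _ _ => Nat.zero_le _) (Finset.mem_range.mpr (Nat.lt_succ_of_le hk))
  refine ⟨N, Nat.le_findGreatest (by simp [N]) fun k hk => ⟨len k, ?_, ?_⟩⟩
  · simpa using (Nat.le_add_right _ _).trans (hle k hk)
  · rw [pref_length, take_pref x ((Nat.le_add_right _ _).trans (hle k hk))]
    exact hmono _ ((Nat.le_add_left _ _).trans (hle k hk)) (hstage k)

end seenLevel

theorem MLTest.exists_mlTest1 {f : ℕ → ℕ} (hf : MLTest f) :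
    ∃ t, MLTest1 t ∧ ∀ x, Fails x f → ¬ Passes1 x t := by
  have hW : Partrec fun q : ℕ × List Bool =>
      eval (Denumerable.ofNat Code (f q.1)) (encode q.2) :=
    eval_part.comp ((Computable.ofNat Code).comp (hf.1.comp .fst)) (Computable.encode.comp .snd)
  obtain ⟨A, hAp, hAdom, hAmono⟩ := hW.exists_primrec_stage
  have hmem : ∀ k p, p ∈ W (f k) ↔ ∃ s, A s (k, p) := fun k p => hAdom (k, p)
  refine ⟨fun b => Part.some (seenLevel A b), ⟨(primrec_seenLevel hAp).to_comp, fun m => ?_⟩,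
    fun x hx ⟨B, hB⟩ => ?_⟩
  · rcases Nat.eq_zero_or_pos m with rfl | hm
    · simpa using prob_le_one
    · refine (measure_mono ((cyl_mono fun b hb => ?_).trans (cyl_setOf_prefix_subset _))).trans
        (hf.2 m)
      obtain ⟨v, hv, hmv⟩ := hb
      exact exists_prefix_mem_of_le_seenLevel (fun s k p h => (hmem k p).mpr ⟨s, h⟩) hm
        (Part.mem_some_iff.mp hv ▸ hmv)
  · obtain ⟨n, hn⟩ := exists_le_seenLevel_pref (fun k p => (hmem k p).mp) hAmono hx (B + 1)
    have := hB n _ (Part.mem_some _)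
    omega

theorem MLTest1.exists_mlTest {t : List Bool →. ℕ} (ht : MLTest1 t) :
    ∃ f, MLTest f ∧ ∀ x, ¬ Passes1 x t → Fails x f := by
  have hg : Partrec₂ fun (m : ℕ) (b : List Bool) =>
      (t b).bind fun v => (Option.guard (m ≤ ·) v : Part ℕ) := by
    have hle : PrimrecRel fun (q : (ℕ × List Bool) × ℕ) (v : ℕ) => q.1.1 ≤ v :=
      Primrec.nat_le.comp (Primrec.fst.comp (Primrec.fst.comp Primrec.fst)) Primrec.snd
    exact (ht.1.comp Computable.snd).bind
      (Computable.ofOption (Primrec.option_guard hle Primrec.snd).to_comp)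
  obtain ⟨f, hf, hWdom⟩ := hg.exists_computable_W_eq
  have hW : ∀ m, W (f m) = {b | ∃ v ∈ t b, m ≤ v} := fun m => by
    rw [hWdom]; ext b; simp [Part.dom_iff_mem, Part.mem_bind_iff]
  refine ⟨f, ⟨hf, fun m => hW m ▸ ht.2 m⟩, fun x hx m => ?_⟩
  simp only [Passes1, not_exists, not_forall, not_le] at hx
  obtain ⟨n, v, hv, hmv⟩ := hx m
  exact mem_cyl_iff.mpr ⟨n, hW m ▸ ⟨v, hv, hmv.le⟩⟩

/-- The two formulations of Martin-Löf randomness coincide. -/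
theorem stmt16 (x : ℕ → Bool) :
    (∀ t : List Bool →. ℕ, MLTest1 t → Passes1 x t) ↔
      (∀ f : ℕ → ℕ, MLTest f → ¬ Fails x f) := by
  constructor
  · intro h f hf hfails
    obtain ⟨t, ht, hpasses⟩ := hf.exists_mlTest1
    exact hpasses x hfails (h t ht)
  · intro h t ht
    by_contra hpasses
    obtain ⟨f, hf, hfails⟩ := ht.exists_mlTest
    exact h f hf (hfails x hpasses)
end
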